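/- With D₋₂, …, D₂ the 3×3 matrices from the previous context, for every unit vector P̂ ∈ ℂ³, one has min over unit vectors y ∈ ℂ³ of max_{−2 ≤ m ≤ 2} |yᵀ D_m P̂| > 0. -/

import Mathlib

/-! For `P ≠ 0` the map `y ↦ (yᵀ D_m P)_m` from `ℂ³` to `ℂ⁵` is linear and injective, so, being
an injective linear map on a finite-dimensional space, it is bounded below by some `c > 0` on the
unit sphere; with the sup norm on `ℂ⁵` this bound is exactly `max_m |yᵀ D_m P| ≥ c`.
Injectivity is the statement that the vectors `D_m P` span `ℂ³`. With `u = P₀ + i P₁` and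
`v = i P₁ - P₀`, the five equations `yᵀ D_m P = 0` form a banded system in `y` whose outer
diagonals carry `u` and `v` and whose middle one carries `P₂`; it forces `y = 0` by forward
substitution if `u ≠ 0`, backward substitution if `v ≠ 0`, and directly if `u = v = 0 ≠ P₂`. -/

open Real Complex Matrix

/-- `N⁽⁻¹⁾, N⁽⁰⁾, N⁽¹⁾`: the explicit `3×5` complex matrices of the paper,
indexed here by `Fin 3` (index `h` corresponds to `N⁽ʰ⁻¹⁾`). -/
noncomputable def Nmat : Fin 3 → Matrix (Fin 3) (Fin 5) ℂ :=
  ![!![((3 * Real.sqrt 5 / 5 : ℝ) : ℂ), 0, -((Real.sqrt 30 / 10 : ℝ) : ℂ), 0, 0;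
      ((3 * Real.sqrt 5 / 5 : ℝ) : ℂ) * Complex.I, 0,
        ((Real.sqrt 30 / 10 : ℝ) : ℂ) * Complex.I, 0, 0;
      0, ((3 * Real.sqrt 5 / 5 : ℝ) : ℂ), 0, 0, 0],
    !![0, ((3 * Real.sqrt 10 / 10 : ℝ) : ℂ), 0, -((3 * Real.sqrt 10 / 10 : ℝ) : ℂ), 0;
      0, ((3 * Real.sqrt 10 / 10 : ℝ) : ℂ) * Complex.I, 0,
        ((3 * Real.sqrt 10 / 10 : ℝ) : ℂ) * Complex.I, 0;
      0, 0, ((2 * Real.sqrt 15 / 5 : ℝ) : ℂ), 0, 0],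
    !![0, 0, ((Real.sqrt 30 / 10 : ℝ) : ℂ), 0, -((3 * Real.sqrt 5 / 5 : ℝ) : ℂ);
      0, 0, ((Real.sqrt 30 / 10 : ℝ) : ℂ) * Complex.I, 0,
        ((3 * Real.sqrt 5 / 5 : ℝ) : ℂ) * Complex.I;
      0, 0, 0, ((3 * Real.sqrt 5 / 5 : ℝ) : ℂ), 0]]

/-- The `3×3` matrices `D_m` (`m = -2,…,2`, indexed here by `Fin 5`):
`(D_m)_{ij} = n^{(i-2)}_{j, m+3}`. -/
noncomputable def Dmat (m : Fin 5) : Matrix (Fin 3) (Fin 3) ℂ :=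
  Matrix.of fun i j => Nmat i j m

theorem Pi.norm_eq_ciSup {ι E : Type*} [Fintype ι] [Nonempty ι] [SeminormedAddGroup E]
    (f : ι → E) : ‖f‖ = ⨆ i, ‖f i‖ :=
  (IsGreatest.pi_norm f).isLUB.ciSup_eq.symm

theorem LinearMap.iInf_norm_apply_sphere_pos {𝕜 E F : Type*} [RCLike 𝕜] [NormedAddCommGroup E]
    [NormedSpace 𝕜 E] [FiniteDimensional 𝕜 E] [Nontrivial E] [NormedAddCommGroup F]
    [NormedSpace 𝕜 F] {L : E →ₗ[𝕜] F} (hL : Function.Injective L) :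
    0 < ⨅ y : {y : E // ‖y‖ = 1}, ‖L y‖ := by
  obtain ⟨K, -, hK⟩ := L.injective_iff_antilipschitz.1 hL
  obtain ⟨c, hc, hcL⟩ := antilipschitzWith_iff_exists_mul_le_norm.1 ⟨K, hK⟩
  obtain ⟨x, hx⟩ := exists_ne (0 : E)
  have : Nonempty {y : E // ‖y‖ = 1} := ⟨⟨_, norm_smul_inv_norm (𝕜 := 𝕜) hx⟩⟩
  exact hc.trans_le (le_ciInf fun y ↦ by simpa [y.2] using hcL y)

theorem Matrix.iInf_sphere_iSup_norm_vecMul_pos {𝕜 m n : Type*} [RCLike 𝕜] [Fintype m]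
    [Nonempty m] [Fintype n] [Nonempty n] (A : Matrix m n 𝕜) (hA : ∀ y, y ᵥ* A = 0 → y = 0) :
    0 < ⨅ y : {y : EuclideanSpace 𝕜 m // ‖y‖ = 1}, ⨆ j, ‖(y.1 ᵥ* A) j‖ := by
  have hL : Function.Injective (A.vecMulLinear ∘ₗ (WithLp.linearEquiv 2 𝕜 (m → 𝕜)).toLinearMap) :=
    (injective_iff_map_eq_zero _).2 fun y hy ↦ (WithLp.linearEquiv 2 𝕜 _).injective.eq_iff.1
      ((hA _ hy).trans (map_zero _).symm)
  simpa [Pi.norm_eq_ciSup] using LinearMap.iInf_norm_apply_sphere_pos hL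

theorem eq_zero_of_banded_system {R : Type*} [CommRing R] [NoZeroDivisors R]
    {a b c d u p v y₀ y₁ y₂ : R} (ha : a ≠ 0) (hb : b ≠ 0) (hc : c ≠ 0) (hd : d ≠ 0)
    (hupv : u ≠ 0 ∨ v ≠ 0 ∨ p ≠ 0)
    (h₀ : a * y₀ * u = 0) (h₁ : a * y₀ * p + c * y₁ * u = 0)
    (h₂ : b * y₀ * v + d * y₁ * p + b * y₂ * u = 0) (h₃ : c * y₁ * v + a * y₂ * p = 0)
    (h₄ : a * y₂ * v = 0) : y₀ = 0 ∧ y₁ = 0 ∧ y₂ = 0 := by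
  by_cases hu : u = 0
  swap
  · obtain rfl : y₀ = 0 := by simpa [ha, hu] using h₀
    obtain rfl : y₁ = 0 := by simpa [hc, hu] using h₁
    simpa [hb, hu] using h₂
  by_cases hv : v = 0
  swap
  · obtain rfl : y₂ = 0 := by simpa [ha, hv] using h₄
    obtain rfl : y₁ = 0 := by simpa [hc, hv] using h₃
    simpa [hb, hv] using h₂
  have hp : p ≠ 0 := by simpa [hu, hv] using hupv
  subst hu hv
  exact ⟨by simpa [ha, hp] using h₁, by simpa [hd, hp] using h₂, by simpa [ha, hp] using h₃⟩

theorem eq_zero_of_forall_dotProduct_Dmat_mulVec_eq_zero {P : Fin 3 → ℂ} (hP : P ≠ 0)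
    {y : Fin 3 → ℂ} (h : ∀ m, y ⬝ᵥ (Dmat m *ᵥ P) = 0) : y = 0 := by
  set u := P 0 + I * P 1
  set v := I * P 1 - P 0
  have hupv : u ≠ 0 ∨ v ≠ 0 ∨ P 2 ≠ 0 := by
    by_contra! ⟨hu, hv, hp⟩
    refine hP (funext fun i ↦ ?_)
    fin_cases i
    · show P 0 = 0
      linear_combination (hu - hv) / 2
    · show P 1 = 0
      linear_combination -I * (hu + hv) / 2 + P 1 * I_sq
    · exact hp
  have h₀ := h 0
  have h₁ := h 1
  have h₂ := h 2
  have h₃ := h 3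
  have h₄ := h 4
  simp only [dotProduct, mulVec, Dmat, Nmat, Fin.isValue, of_apply, Fin.sum_univ_succ,
    Fin.succ_zero_eq_one, Finset.univ_unique, Fin.default_eq_zero, Finset.sum_singleton,
    Fin.succ_one_eq_two, cons_val_zero, cons_val', cons_val_fin_one, cons_val_one, cons_val,
    zero_mul, add_zero, cons_val_succ, mul_zero, Finset.sum_const_zero, zero_add, neg_mul]
    at h₀ h₁ h₂ h₃ h₄
  have hne (x : ℝ) (hx : 0 < x) : (x : ℂ) ≠ 0 := ofReal_ne_zero.2 hx.ne'
  obtain ⟨hy₀, hy₁, hy₂⟩ := eq_zero_of_banded_system (y₀ := y 0) (y₁ := y 1) (y₂ := y 2)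
    (hne (3 * √5 / 5) (by positivity)) (hne (√30 / 10) (by positivity))
    (hne (3 * √10 / 10) (by positivity))
    (hne (2 * √15 / 5) (by positivity)) hupv
    (by linear_combination h₀) (by linear_combination h₁) (by linear_combination h₂)
    (by linear_combination h₃) (by linear_combination h₄)
  ext i
  fin_cases i <;> assumption

/-- For every unit vector `P̂ ∈ ℂ³`,
`min_{‖y‖=1} max_{-2 ≤ m ≤ 2} |yᵀ D_m P̂| > 0`. -/
theorem inf_sup_bilinear_pos (P : EuclideanSpace ℂ (Fin 3)) (hP : ‖P‖ = 1) :
    0 < ⨅ y : {y : EuclideanSpace ℂ (Fin 3) // ‖y‖ = 1},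
          ⨆ m : Fin 5, ‖(∑ i : Fin 3, y.1 i * (Dmat m).mulVec P i)‖ := by
  have hP₀ : (P : Fin 3 → ℂ) ≠ 0 := by
    intro h
    simp [show P = 0 from WithLp.ofLp_injective 2 h] at hP
  exact Matrix.iInf_sphere_iSup_norm_vecMul_pos (Matrix.of fun i m ↦ (Dmat m *ᵥ P) i)
    fun y hy ↦ eq_zero_of_forall_dotProduct_Dmat_mulVec_eq_zero hP₀ fun m ↦ congrFun hy m
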